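/- For a finite normal-form game Γ, a strategy profile σ is an empirical equilibrium of Γ if and only if σ is a Nash equilibrium of Γ and there is a convergent sequence of interior payoff monotone strategy profiles for Γ whose pointwise limit is σ. -/

import Mathlib

open Filter Topology

section GameDefs

variable {N : Type} [Fintype N] [DecidableEq N] {A : N → Type}
  [∀ i, Fintype (A i)] [∀ i, DecidableEq (A i)]

/-- A mixed-strategy profile: each `σ i` is a probability distribution on `A i`. -/
def IsStrategy (σ : ∀ i, A i → ℝ) : Prop :=
  (∀ i a, 0 ≤ σ i a) ∧ ∀ i, ∑ a, σ i a = 1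

/-- An interior profile places positive probability on every action. -/
def Interior (σ : ∀ i, A i → ℝ) : Prop :=
  ∀ i a, 0 < σ i a

/-- Expected utility of player `i` at profile `σ`. -/
noncomputable def expUtil (u : ∀ i : N, (∀ j, A j) → ℝ) (σ : ∀ i, A i → ℝ) (i : N) : ℝ :=
  ∑ a : ∀ j, A j, u i a * ∏ j, σ j (a j)

/-- Expected utility of player `i` from playing action `ai` against `σ₋ᵢ`. -/
noncomputable def devUtil (u : ∀ i : N, (∀ j, A j) → ℝ) (σ : ∀ i, A i → ℝ)
    (i : N) (ai : A i) : ℝ :=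
  expUtil u (Function.update σ i (fun b => if b = ai then (1 : ℝ) else 0)) i

/-- Nash equilibrium. -/
def IsNash (u : ∀ i : N, (∀ j, A j) → ℝ) (σ : ∀ i, A i → ℝ) : Prop :=
  IsStrategy σ ∧ ∀ (i : N) (μ : A i → ℝ), (∀ a, 0 ≤ μ a) → (∑ a, μ a = 1) →
    expUtil u (Function.update σ i μ) i ≤ expUtil u σ i

/-- Weak payoff monotonicity: differences in behavior reveal differences in payoffs. -/
def WeaklyPayoffMonotone (u : ∀ i : N, (∀ j, A j) → ℝ) (σ : ∀ i, A i → ℝ) : Prop :=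
  IsStrategy σ ∧ ∀ (i : N) (ai bi : A i), σ i bi < σ i ai →
    devUtil u σ i bi < devUtil u σ i ai

/-- Payoff monotonicity. -/
def PayoffMonotone (u : ∀ i : N, (∀ j, A j) → ℝ) (σ : ∀ i, A i → ℝ) : Prop :=
  IsStrategy σ ∧ ∀ (i : N) (ai bi : A i),
    σ i bi ≤ σ i ai ↔ devUtil u σ i bi ≤ devUtil u σ i ai

/-- Pointwise convergence of a sequence of profiles. -/
def ConvergesTo (s : ℕ → ∀ i, A i → ℝ) (σ : ∀ i, A i → ℝ) : Prop :=
  ∀ (i : N) (ai : A i), Tendsto (fun n => s n i ai) atTop (𝓝 (σ i ai))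

/-- Empirical equilibrium: a Nash equilibrium that is the limit of weakly payoff
monotone profiles. -/
def IsEmpirical (u : ∀ i : N, (∀ j, A j) → ℝ) (σ : ∀ i, A i → ℝ) : Prop :=
  IsNash u σ ∧ ∃ s : ℕ → ∀ i, A i → ℝ,
    (∀ n, WeaklyPayoffMonotone u (s n)) ∧ ConvergesTo s σ

/-- Proper equilibrium (Myerson). -/
def IsProper (u : ∀ i : N, (∀ j, A j) → ℝ) (σ : ∀ i, A i → ℝ) : Prop :=
  IsStrategy σ ∧ ∃ s : ℕ → ∀ i, A i → ℝ,
    (∀ n, IsStrategy (s n) ∧ Interior (s n) ∧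
      ∀ (i : N) (ai bi : A i),
        devUtil u (s n) i bi < devUtil u (s n) i ai →
          s n i bi ≤ (1 / (n + 1) : ℝ) * s n i ai) ∧
    ConvergesTo s σ

/-- Perfect equilibrium (Selten, in Myerson's formulation). -/
def IsPerfect (u : ∀ i : N, (∀ j, A j) → ℝ) (σ : ∀ i, A i → ℝ) : Prop :=
  IsStrategy σ ∧ ∃ s : ℕ → ∀ i, A i → ℝ,
    (∀ n, IsStrategy (s n) ∧ Interior (s n) ∧
      ∀ (i : N) (ai : A i), (1 / (n + 1) : ℝ) < s n i ai →
        ∀ bi : A i, devUtil u (s n) i bi ≤ devUtil u (s n) i ai) ∧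
    ConvergesTo s σ

/-- `bi` weakly dominates `ai` for player `i`. -/
def WeaklyDominates (u : ∀ i : N, (∀ j, A j) → ℝ) (i : N) (bi ai : A i) : Prop :=
  (∀ a : ∀ j, A j, u i (Function.update a i ai) ≤ u i (Function.update a i bi)) ∧
  ∃ a : ∀ j, A j, u i (Function.update a i ai) < u i (Function.update a i bi)

/-- Undominated Nash equilibrium. -/
def IsUndominatedNash (u : ∀ i : N, (∀ j, A j) → ℝ) (σ : ∀ i, A i → ℝ) : Prop :=
  IsNash u σ ∧ ∀ (i : N) (ai : A i), 0 < σ i ai →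
    ¬ ∃ bi : A i, WeaklyDominates u i bi ai

end GameDefs

/-- A regular quantal response function on a finite set of actions `B`:
interiority, continuity, responsiveness, and monotonicity. -/
def IsRegularQRF {B : Type} [Fintype B] [DecidableEq B]
    (p : (B → ℝ) → (B → ℝ)) : Prop :=
  (∀ x, (∀ a, 0 < p x a) ∧ ∑ a, p x a = 1) ∧
  Continuous p ∧
  (∀ (x : B → ℝ) (η : ℝ) (a : B), 0 < η →
    p x a < p (Function.update x a (x a + η)) a) ∧
  ∀ (x : B → ℝ) (a b : B), x b < x a → p x b < p x a

section QREDefs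

variable {N : Type} [Fintype N] [DecidableEq N] {A : N → Type}
  [∀ i, Fintype (A i)] [∀ i, DecidableEq (A i)]

/-- Quantal response equilibrium with respect to a profile of QRFs `p`. -/
def IsQRE (u : ∀ i : N, (∀ j, A j) → ℝ) (p : ∀ i, (A i → ℝ) → (A i → ℝ))
    (σ : ∀ i, A i → ℝ) : Prop :=
  ∀ i : N, σ i = p i (fun ai => devUtil u σ i ai)

/-- A sequence of profiles of QRFs is utility maximizing in the limit. -/
def UtilityMaximizingInLimit (u : ∀ i : N, (∀ j, A j) → ℝ)
    (p : ℕ → ∀ i, (A i → ℝ) → (A i → ℝ)) : Prop :=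
  ∀ (s : ℕ → ∀ i, A i → ℝ) (σ : ∀ i, A i → ℝ),
    (∀ n, IsQRE u (p n) (s n)) → ConvergesTo s σ → IsNash u σ

/-- `σ` is approachable by regular QRE that are utility maximizing in the limit. -/
def ApproachableByRegularQRE (u : ∀ i : N, (∀ j, A j) → ℝ) (σ : ∀ i, A i → ℝ) : Prop :=
  ∃ p : ℕ → ∀ i, (A i → ℝ) → (A i → ℝ),
    (∀ n i, IsRegularQRF (p n i)) ∧ UtilityMaximizingInLimit u p ∧
    ∃ s : ℕ → ∀ i, A i → ℝ, (∀ n, IsQRE u (p n) (s n)) ∧ ConvergesTo s σ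

end QREDefs

/-- A control cost function (van Damme), bundled with its derivative on `(0,1]`. -/
structure ControlCost where
  f : ℝ → ℝ
  f' : ℝ → ℝ
  hasDeriv : ∀ x ∈ Set.Ioc (0:ℝ) 1, HasDerivWithinAt f (f' x) (Set.Ioc (0:ℝ) 1) x
  contDeriv : ContinuousOn f' (Set.Ioc (0:ℝ) 1)
  anti : StrictAntiOn f (Set.Ioc (0:ℝ) 1)
  convex : StrictConvexOn ℝ (Set.Ioc (0:ℝ) 1) f
  atOne : f 1 = 0
  blowup : Tendsto f (nhdsWithin 0 (Set.Ioi (0:ℝ))) atTop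

/-!
A payoff monotone profile is weakly payoff monotone, so one direction is immediate. Conversely, it
suffices that every weakly payoff monotone `τ` lies in the closure of the interior payoff monotone
profiles: that closure then contains every term of the approximating sequence, hence its limit.

For small `t > 0` the map `σ ↦ (1 - t) τ + t (uniform + t · centred payoffs against σ)` contracts
the compact set of strategy profiles, on which payoffs (polynomials in `σ`) are Lipschitz. Its
fixed point `ρ` is interior, within `2 t` of `τ`, and ranks each player's actions first by `τ`
and then, among ties of `τ`, by payoff against `ρ`. Near `τ` the strict preferences of `τ` are
still strict payoff differences, so this ranking is exactly the payoff ranking of `ρ`.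
-/

open scoped NNReal

lemma contDiff_update_apply {ι : Type*} [Fintype ι] [DecidableEq ι] {β : ι → Type*}
    [∀ i, Fintype (β i)] {n : WithTop ℕ∞} (i : ι) (e : β i → ℝ) (j : ι) (x : β j) :
    ContDiff ℝ n (fun σ : ∀ i, β i → ℝ => Function.update σ i e j x) := by
  rcases eq_or_ne j i with rfl | hj
  · simpa using contDiff_const
  · simp only [Function.update_of_ne hj]
    exact contDiff_pi.mp (contDiff_pi.mp contDiff_id j) x

section Strategy

variable {N : Type} {A : N → Type}

lemma convergesTo_iff_tendsto {s : ℕ → ∀ i, A i → ℝ} {σ : ∀ i, A i → ℝ} :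
    ConvergesTo s σ ↔ Tendsto s atTop (𝓝 σ) := by
  simp only [ConvergesTo, tendsto_pi_nhds]

variable [∀ i, Fintype (A i)]

lemma IsStrategy.le_one {σ : ∀ i, A i → ℝ} (h : IsStrategy σ) (i : N) (a : A i) : σ i a ≤ 1 :=
  h.2 i ▸ Finset.single_le_sum (fun b _ => h.1 i b) (Finset.mem_univ a)

lemma isCompact_setOf_isStrategy [Fintype N] : IsCompact {σ : ∀ i, A i → ℝ | IsStrategy σ} := by
  have hclosed : IsClosed {σ : ∀ i, A i → ℝ | IsStrategy σ} := by
    simp only [IsStrategy, Set.ofPred_and, Set.ofPred_forall]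
    exact (isClosed_iInter fun i => isClosed_iInter fun a =>
        isClosed_le continuous_const (by fun_prop)).inter
      (isClosed_iInter fun i => isClosed_eq (by fun_prop) continuous_const)
  refine (isCompact_univ_pi fun i => isCompact_univ_pi fun a =>
    isCompact_Icc (a := (0 : ℝ)) (b := 1)).of_isClosed_subset hclosed fun σ hσ => ?_
  simp only [Set.mem_pi, Set.mem_univ, true_implies, Set.mem_Icc]
  exact fun i a => ⟨hσ.1 i a, hσ.le_one i a⟩

end Strategy

section EmpiricalEquilibrium

variable {N : Type} [Fintype N] [DecidableEq N] {A : N → Type}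
  [∀ i, Fintype (A i)] [∀ i, DecidableEq (A i)] {u : N → (∀ j, A j) → ℝ}

lemma PayoffMonotone.weaklyPayoffMonotone {σ : ∀ i, A i → ℝ} (h : PayoffMonotone u σ) :
    WeaklyPayoffMonotone u σ :=
  ⟨h.1, fun i a b hlt => lt_of_not_ge fun hle => hlt.not_ge ((h.2 i b a).2 hle)⟩

lemma contDiff_devUtil {n : WithTop ℕ∞} (u : N → (∀ j, A j) → ℝ) (i : N) (a : A i) :
    ContDiff ℝ n (fun σ : ∀ i, A i → ℝ => devUtil u σ i a) :=
  ContDiff.sum fun _ _ =>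
    contDiff_const.mul <| contDiff_prod fun _ _ => contDiff_update_apply _ _ _ _

lemma WeaklyPayoffMonotone.eventually_devUtil_lt {τ : ∀ i, A i → ℝ}
    (hτ : WeaklyPayoffMonotone u τ) :
    ∀ᶠ ρ in 𝓝 τ, ∀ i a b, τ i b < τ i a → devUtil u ρ i b < devUtil u ρ i a := by
  refine eventually_all.2 fun i => eventually_all.2 fun a => eventually_all.2 fun b => ?_
  by_cases hlt : τ i b < τ i a
  · exact ((contDiff_devUtil (n := 0) u i b).continuous.continuousAt.eventually_lt
      (contDiff_devUtil (n := 0) u i a).continuous.continuousAt (hτ.2 i a b hlt)).mono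
        fun _ h _ => h
  · exact Eventually.of_forall fun _ h => absurd h hlt

lemma payoffMonotone_of_eq_affine {ρ τ : ∀ i, A i → ℝ} {α γ : ℝ} {β : N → ℝ}
    (hρ : IsStrategy ρ) (hα : 0 < α) (hγ : 0 < γ)
    (heq : ∀ i a, ρ i a = α * τ i a + β i + γ * devUtil u ρ i a)
    (hτ : ∀ i a b, τ i b < τ i a → devUtil u ρ i b < devUtil u ρ i a) :
    PayoffMonotone u ρ := by
  refine ⟨hρ, fun i a b => ?_⟩
  rw [heq i a, heq i b]
  rcases lt_trichotomy (τ i b) (τ i a) with hlt | heq' | hgt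
  · have hU := hτ i a b hlt
    exact iff_of_true (by nlinarith) hU.le
  · rw [heq', add_le_add_iff_left, mul_le_mul_iff_right₀ hγ]
  · have hU := hτ i b a hgt
    exact iff_of_false (by nlinarith) hU.not_ge

noncomputable def centredDevUtil (u : N → (∀ j, A j) → ℝ) (σ : ∀ i, A i → ℝ) :
    ∀ i, A i → ℝ :=
  fun i a => devUtil u σ i a - (∑ b, devUtil u σ i b) / Fintype.card (A i)

lemma contDiff_centredDevUtil {n : WithTop ℕ∞} (u : N → (∀ j, A j) → ℝ) :
    ContDiff ℝ n (centredDevUtil u) :=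
  contDiff_pi.2 fun i => contDiff_pi.2 fun a =>
    (contDiff_devUtil u i a).sub ((ContDiff.sum fun b _ => contDiff_devUtil u i b).div_const _)

lemma sum_centredDevUtil [∀ i, Nonempty (A i)] (σ : ∀ i, A i → ℝ) (i : N) :
    ∑ a, centredDevUtil u σ i a = 0 := by
  have hcard : (Fintype.card (A i) : ℝ) ≠ 0 := by positivity
  simp only [centredDevUtil, Finset.sum_sub_distrib, Finset.sum_const, Finset.card_univ,
    nsmul_eq_mul]
  field_simp
  ring

/-- Centring keeps the value a strategy profile. The factor `t ^ 2` makes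
`perturbedResponse u τ t` a contraction for small `t` and keeps the payoff term dominated by the
tremble `t / |A i|`, so fixed points are interior. -/
noncomputable def perturbedResponse (u : N → (∀ j, A j) → ℝ) (τ : ∀ i, A i → ℝ) (t : ℝ)
    (σ : ∀ i, A i → ℝ) : ∀ i, A i → ℝ :=
  fun i a => (1 - t) * τ i a + t * ((Fintype.card (A i) : ℝ)⁻¹ + t * centredDevUtil u σ i a)

lemma dist_perturbedResponse_perturbedResponse {τ : ∀ i, A i → ℝ} {t : ℝ} (ht : 0 ≤ t)
    (σ σ' : ∀ i, A i → ℝ) :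
    dist (perturbedResponse u τ t σ) (perturbedResponse u τ t σ') =
      t * t * dist (centredDevUtil u σ) (centredDevUtil u σ') := by
  have h : ∀ σ, perturbedResponse u τ t σ =
      (fun i a => (1 - t) * τ i a + t * (Fintype.card (A i) : ℝ)⁻¹) +
        (t * t) • centredDevUtil u σ := fun σ => by
    ext i a
    simp only [perturbedResponse, Pi.add_apply, Pi.smul_apply, smul_eq_mul]
    ring
  rw [h, h, dist_add_left, dist_smul₀, Real.norm_eq_abs, abs_of_nonneg (by positivity)]

variable [∀ i, Nonempty (A i)] {τ σ : ∀ i, A i → ℝ} {t : ℝ}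

lemma perturbedResponse_isStrategy_interior (hτ : IsStrategy τ) (ht0 : 0 < t) (ht1 : t ≤ 1)
    (hσ : ∀ i a, t * |centredDevUtil u σ i a| < (Fintype.card (A i) : ℝ)⁻¹) :
    IsStrategy (perturbedResponse u τ t σ) ∧ Interior (perturbedResponse u τ t σ) := by
  have hpos : ∀ i a, 0 < perturbedResponse u τ t σ i a := fun i a => by
    have hmix : 0 ≤ (1 - t) * τ i a := mul_nonneg (by linarith) (hτ.1 i a)
    have htremble : 0 < (Fintype.card (A i) : ℝ)⁻¹ + t * centredDevUtil u σ i a := by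
      nlinarith [hσ i a, neg_abs_le (centredDevUtil u σ i a)]
    exact add_pos_of_nonneg_of_pos hmix (mul_pos ht0 htremble)
  refine ⟨⟨fun i a => (hpos i a).le, fun i => ?_⟩, hpos⟩
  have hcard : (Fintype.card (A i) : ℝ) ≠ 0 := by positivity
  simp only [perturbedResponse, Finset.sum_add_distrib, ← Finset.mul_sum, hτ.2 i,
    sum_centredDevUtil, Finset.sum_const, Finset.card_univ, nsmul_eq_mul]
  field_simp
  ring

lemma dist_perturbedResponse_le (hτ : IsStrategy τ) (ht0 : 0 ≤ t)
    (hσ : ∀ i a, t * |centredDevUtil u σ i a| < (Fintype.card (A i) : ℝ)⁻¹) :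
    dist (perturbedResponse u τ t σ) τ ≤ 2 * t := by
  have h2t : 0 ≤ 2 * t := by positivity
  refine (dist_pi_le_iff h2t).2 fun i => (dist_pi_le_iff h2t).2 fun a => ?_
  have hinv : (Fintype.card (A i) : ℝ)⁻¹ ≤ 1 :=
    inv_le_one_of_one_le₀ (by exact_mod_cast Fintype.card_pos)
  have hmix : |(Fintype.card (A i) : ℝ)⁻¹ - τ i a| ≤ 1 :=
    abs_sub_le_of_nonneg_of_le (by positivity) hinv (hτ.1 i a) (hτ.le_one i a)
  calc dist (perturbedResponse u τ t σ i a) (τ i a)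
      = t * |(Fintype.card (A i) : ℝ)⁻¹ - τ i a + t * centredDevUtil u σ i a| := by
        rw [Real.dist_eq, ← abs_of_nonneg ht0, ← abs_mul, abs_of_nonneg ht0]
        congr 1
        simp only [perturbedResponse]
        ring
    _ ≤ t * (1 + 1) := by
        gcongr
        refine (abs_add_le _ _).trans (add_le_add hmix ?_)
        rw [abs_mul, abs_of_nonneg ht0]
        exact (hσ i a).le.trans hinv
    _ = 2 * t := by ring

lemma exists_isStrategy_isFixedPt_perturbedResponse (hτ : IsStrategy τ) (ht0 : 0 < t)
    (ht1 : t ≤ 1)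
    (hbound : ∀ σ, IsStrategy σ → ∀ i a,
      t * |centredDevUtil u σ i a| < (Fintype.card (A i) : ℝ)⁻¹)
    {K : ℝ≥0} (hK : LipschitzOnWith K (centredDevUtil u) {σ | IsStrategy σ})
    (htK : t * t * K < 1) :
    ∃ ρ, IsStrategy ρ ∧ Function.IsFixedPt (perturbedResponse u τ t) ρ := by
  have hmaps : Set.MapsTo (perturbedResponse u τ t) {σ | IsStrategy σ} {σ | IsStrategy σ} :=
    fun σ hσ => (perturbedResponse_isStrategy_interior hτ ht0 ht1 (hbound σ hσ)).1
  have hcontr : ContractingWith (t * t * K).toNNReal (hmaps.restrict _ _ _) := by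
    refine ⟨Real.toNNReal_lt_one.2 htK, LipschitzOnWith.mapsToRestrict hmaps ?_⟩
    refine LipschitzOnWith.of_dist_le_mul fun σ hσ σ' hσ' => ?_
    rw [dist_perturbedResponse_perturbedResponse ht0.le σ σ', Real.coe_toNNReal _ (by positivity),
      mul_assoc (t * t)]
    exact mul_le_mul_of_nonneg_left (hK.dist_le_mul σ hσ σ' hσ') (by positivity)
  obtain ⟨ρ, hρ, hfix, -⟩ :=
    hcontr.exists_fixedPoint' isCompact_setOf_isStrategy.isComplete hmaps hτ (edist_ne_top _ _)
  exact ⟨ρ, hρ, hfix⟩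

theorem WeaklyPayoffMonotone.mem_closure_interior_payoffMonotone
    (hτ : WeaklyPayoffMonotone u τ) : τ ∈ closure {ρ | Interior ρ ∧ PayoffMonotone u ρ} := by
  obtain ⟨K, hK⟩ := (contDiff_centredDevUtil (n := 1) u).locallyLipschitz.locallyLipschitzOn
    |>.exists_lipschitzOnWith_of_compact (isCompact_setOf_isStrategy (A := A))
  obtain ⟨C, hC⟩ := isCompact_setOf_isStrategy.exists_bound_of_continuousOn
    (contDiff_centredDevUtil (n := 0) u).continuous.continuousOn
  obtain ⟨r, hr, hnear⟩ := Metric.eventually_nhds_iff.1 hτ.eventually_devUtil_lt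
  refine Metric.mem_closure_iff.2 fun ε hε => ?_
  have hsmall : ∀ᶠ t in 𝓝[>] (0 : ℝ), 0 < t ∧ t < 1 ∧
      (∀ i, t * C < (Fintype.card (A i) : ℝ)⁻¹) ∧ t * t * K < 1 ∧ 2 * t < min ε r := by
    refine Eventually.and self_mem_nhdsWithin (eventually_nhdsWithin_of_eventually_nhds ?_)
    refine (eventually_lt_nhds one_pos).and ((eventually_all.2 fun i => ?_).and (.and ?_ ?_))
    · exact ContinuousAt.eventually_lt (by fun_prop) continuousAt_const
        (by simp [Fintype.card_pos])
    · exact ContinuousAt.eventually_lt (by fun_prop) continuousAt_const (by simp)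
    · exact ContinuousAt.eventually_lt (by fun_prop) continuousAt_const (by simp [hε, hr])
  obtain ⟨t, ht0, ht1, htC, htK, htε⟩ := hsmall.exists
  have hbound : ∀ σ, IsStrategy σ → ∀ i a,
      t * |centredDevUtil u σ i a| < (Fintype.card (A i) : ℝ)⁻¹ := fun σ hσ i a => by
    have hσC : ‖centredDevUtil u σ i a‖ ≤ C :=
      (norm_le_pi_norm _ a).trans ((norm_le_pi_norm _ i).trans (hC σ hσ))
    rw [Real.norm_eq_abs] at hσC
    exact (mul_le_mul_of_nonneg_left hσC ht0.le).trans_lt (htC i)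
  obtain ⟨ρ, hρ, hfix⟩ :=
    exists_isStrategy_isFixedPt_perturbedResponse hτ.1 ht0 ht1.le hbound hK htK
  have hdist : dist ρ τ < min ε r := calc
    dist ρ τ = dist (perturbedResponse u τ t ρ) τ := by rw [hfix]
    _ < min ε r := (dist_perturbedResponse_le hτ.1 ht0.le (hbound ρ hρ)).trans_lt htε
  have hinterior : Interior ρ := by
    have h := (perturbedResponse_isStrategy_interior hτ.1 ht0 ht1.le (hbound ρ hρ)).2
    rwa [hfix] at h
  have hmonotone : PayoffMonotone u ρ := by
    refine payoffMonotone_of_eq_affine hρ (sub_pos.2 ht1) (mul_pos ht0 ht0)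
      (β := fun i => t * (Fintype.card (A i) : ℝ)⁻¹ -
        t * t * ((∑ b, devUtil u ρ i b) / Fintype.card (A i)))
      (fun i a => ?_) (hnear (hdist.trans_le (min_le_right _ _)))
    conv_lhs => rw [← hfix]
    simp only [perturbedResponse, centredDevUtil]
    ring
  exact ⟨ρ, ⟨hinterior, hmonotone⟩, dist_comm ρ τ ▸ hdist.trans_le (min_le_left _ _)⟩

end EmpiricalEquilibrium

theorem empirical_iff_interior_payoff_monotone_limit {N : Type} [Fintype N] [DecidableEq N] {A : N → Type}
    [∀ i, Fintype (A i)] [∀ i, DecidableEq (A i)] [∀ i, Nonempty (A i)]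
    (u : ∀ i : N, (∀ j, A j) → ℝ) (σ : ∀ i, A i → ℝ) :
    IsEmpirical u σ ↔
      (IsNash u σ ∧ ∃ s : ℕ → ∀ i, A i → ℝ,
        (∀ n, Interior (s n) ∧ PayoffMonotone u (s n)) ∧ ConvergesTo s σ) := by
  constructor
  · rintro ⟨hNash, s, hs, hlim⟩
    have hσ : σ ∈ closure {ρ | Interior ρ ∧ PayoffMonotone u ρ} :=
      isClosed_closure.mem_of_tendsto (convergesTo_iff_tendsto.1 hlim)
        (Eventually.of_forall fun n => (hs n).mem_closure_interior_payoffMonotone)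
    obtain ⟨s', hs', hlim'⟩ := mem_closure_iff_seq_limit.1 hσ
    exact ⟨hNash, s', hs', convergesTo_iff_tendsto.2 hlim'⟩
  · rintro ⟨hNash, s, hs, hlim⟩
    exact ⟨hNash, s, fun n => (hs n).2.weaklyPayoffMonotone, hlim⟩
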